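/- Consider the saddle-point linear system [[A, Bᵀ],[B, -C]] (x, y) = (f, g) with A symmetric positive definite and C symmetric positive semidefinite over ℝ. If ker(Bᵀ) ∩ ker(C) = {0} (i.e., Bᵀ y = 0 and C y = 0 imply y = 0), then the system has a unique solution for every (f, g). (Well-posedness of the stabilized finite element Stokes system with stabilization matrix C.) -/

import Mathlib

open Matrix

/-- Well-posedness of the stabilized finite element Stokes system: the
saddle-point system `[[A, Bᵀ],[B, -C]] (x,y) = (f,g)` with `A` symmetric
positive definite, `C` symmetric positive semidefinite and
`ker Bᵀ ∩ ker C = {0}` has a unique solution for every right-hand side. -/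
theorem stabilized_saddle_point_wellposed
    {n m : ℕ} (A : Matrix (Fin n) (Fin n) ℝ) (B : Matrix (Fin m) (Fin n) ℝ)
    (C : Matrix (Fin m) (Fin m) ℝ)
    (hA : A.PosDef) (hC : C.PosSemidef)
    (hker : ∀ y : Fin m → ℝ,
      B.transpose.mulVec y = 0 ∧ C.mulVec y = 0 → y = 0) :
    ∀ (f : Fin n → ℝ) (g : Fin m → ℝ),
      ∃! x : (Fin n ⊕ Fin m) → ℝ,
        (Matrix.fromBlocks A B.transpose B (-C)).mulVec x = Sum.elim f g := by
  set M := Matrix.fromBlocks A B.transpose B (-C) with hM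
  have hinj : Function.Injective M.mulVecLin := by
    rw [← LinearMap.ker_eq_bot, LinearMap.ker_eq_bot']
    intro z hz
    simp only [mulVecLin_apply] at hz
    set x : Fin n → ℝ := z ∘ Sum.inl with hx
    set y : Fin m → ℝ := z ∘ Sum.inr with hy
    have hz' : M.mulVec z = Sum.elim (A.mulVec x + B.transpose.mulVec y)
        (B.mulVec x + (-C).mulVec y) := by
      rw [hM]
      have : z = Sum.elim x y := by funext i; cases i <;> rfl
      rw [this, fromBlocks_mulVec]
      simp
    rw [hz] at hz'
    have h1 : A.mulVec x + B.transpose.mulVec y = 0 := by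
      funext i; exact (congrFun hz'.symm (Sum.inl i))
    have h2 : B.mulVec x + (-C).mulVec y = 0 := by
      funext i; exact (congrFun hz'.symm (Sum.inr i))
    -- take inner products
    have e1 : x ⬝ᵥ A.mulVec x + x ⬝ᵥ B.transpose.mulVec y = 0 := by
      rw [← dotProduct_add, h1, dotProduct_zero]
    have e2 : y ⬝ᵥ B.mulVec x - y ⬝ᵥ C.mulVec y = 0 := by
      have := congrArg (fun v => y ⬝ᵥ v) h2
      simpa [dotProduct_add, neg_mulVec, sub_eq_add_neg] using this
    have hsym : x ⬝ᵥ B.transpose.mulVec y = y ⬝ᵥ B.mulVec x := by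
      rw [dotProduct_mulVec, vecMul_transpose, dotProduct_comm]
    have key : x ⬝ᵥ A.mulVec x + y ⬝ᵥ C.mulVec y = 0 := by
      linarith [e1, e2, hsym]
    have hAx : 0 ≤ x ⬝ᵥ A.mulVec x := by
      have := hA.posSemidef.dotProduct_mulVec_nonneg x
      simpa using this
    have hCy : 0 ≤ y ⬝ᵥ C.mulVec y := by
      have := hC.dotProduct_mulVec_nonneg y
      simpa using this
    have hxA : x ⬝ᵥ A.mulVec x = 0 := by linarith
    have hyC : y ⬝ᵥ C.mulVec y = 0 := by linarith
    have hx0 : x = 0 := by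
      by_contra hx0
      have := hA.dotProduct_mulVec_pos hx0
      rw [show (star x : Fin n → ℝ) = x from rfl] at this
      exact absurd hxA (by linarith)
    have hCy0 : C.mulVec y = 0 := by
      have := (hC.dotProduct_mulVec_zero_iff y).mp (by simpa using hyC)
      exact this
    have hBy0 : B.transpose.mulVec y = 0 := by
      rw [hx0] at h1; simpa using h1
    have hy0 : y = 0 := hker y ⟨hBy0, hCy0⟩
    funext i
    cases i with
    | inl i => exact congrFun hx0 i
    | inr i => exact congrFun hy0 i
  have hbij : Function.Bijective M.mulVecLin :=
    ⟨hinj, LinearMap.surjective_of_injective hinj⟩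
  intro f g
  obtain ⟨z, hz⟩ := hbij.2 (Sum.elim f g)
  refine ⟨z, by simpa using hz, fun w hw => hbij.1 ?_⟩
  simp only [mulVecLin_apply]
  rw [hw, ← hz]; simp
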